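/- arXiv:math/0511226 — 4 statements merged into one kernel-verified Lean document; each statement's English description precedes it below -/
import Mathlib

section
/- For every p ∈ (0,1), q = 1−p, every positive integer n, and every real r > 0, the r-th inverse moment of the positive binomial distribution admits the integral representation f_r(n) = (n·p/Γ(r+1)) ∫₀^∞ x^r e^{−x} (q + p·e^{−x})^{n−1} dx. -/
open MeasureTheory Real Finset

/-!
Expand `(q + p e^{-x})^{n-1}` binomially: the `k`-th term of the integrand is a multiple of
`x^r e^{-(k+1)x}`, whose integral is `Γ(r+1) / (k+1)^{r+1}`. The identity
`n · C(n-1, k) = (k+1) · C(n, k+1)` then turns `n p C(n-1,k) p^k q^{n-1-k} / (k+1)^{r+1}` into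
the `(k+1)`-th term `C(n, k+1) p^{k+1} q^{n-(k+1)} / (k+1)^r` of the inverse moment.
-/

lemma integrableOn_rpow_mul_exp_neg_mul {s b : ℝ} (hs : -1 < s) (hb : 0 < b) :
    IntegrableOn (fun x : ℝ => x ^ s * exp (-(b * x))) (Set.Ioi 0) := by
  simpa [rpow_one, neg_mul] using integrableOn_rpow_mul_exp_neg_mul_rpow hs one_pos hb

lemma integral_rpow_mul_exp_neg_mul_Ioi_eq_Gamma_div {s b : ℝ} (hs : -1 < s) (hb : 0 < b) :
    ∫ x in Set.Ioi (0:ℝ), x ^ s * exp (-(b * x)) = Gamma (s + 1) / b ^ (s + 1) := by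
  have h := integral_rpow_mul_exp_neg_mul_Ioi (a := s + 1) (by linarith) hb
  rw [add_sub_cancel_right, one_div, inv_rpow hb.le] at h
  rw [h, inv_mul_eq_div]

lemma rpow_mul_exp_neg_mul_add_mul_exp_neg_pow (s p q x : ℝ) (m : ℕ) :
    x ^ s * exp (-x) * (q + p * exp (-x)) ^ m
      = ∑ k ∈ range (m + 1),
          m.choose k * p ^ k * q ^ (m - k) * (x ^ s * exp (-((k + 1) * x))) := by
  rw [add_comm q, add_pow, mul_sum]
  refine sum_congr rfl fun k _ => ?_
  have hexp : exp (-((k + 1) * x)) = exp (-x) ^ (k + 1) := by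
    rw [← exp_nat_mul]
    push_cast
    ring_nf
  rw [hexp, pow_succ, mul_pow]
  ring

lemma integral_rpow_mul_exp_neg_mul_add_mul_exp_neg_pow {s : ℝ} (hs : -1 < s) (p q : ℝ)
    (m : ℕ) :
    ∫ x in Set.Ioi (0:ℝ), x ^ s * exp (-x) * (q + p * exp (-x)) ^ m
      = Gamma (s + 1) *
          ∑ k ∈ range (m + 1), m.choose k * p ^ k * q ^ (m - k) / ((k : ℝ) + 1) ^ (s + 1) := by
  simp_rw [rpow_mul_exp_neg_mul_add_mul_exp_neg_pow s p q _ m, mul_sum]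
  refine (integral_finsetSum _ fun (k : ℕ) _ =>
    (integrableOn_rpow_mul_exp_neg_mul hs (by positivity : (0:ℝ) < k + 1)).const_mul _).trans
    (sum_congr rfl fun k _ => ?_)
  rw [integral_const_mul,
    integral_rpow_mul_exp_neg_mul_Ioi_eq_Gamma_div hs (by positivity : (0:ℝ) < k + 1)]
  ring

lemma choose_succ_mul_pow_div_rpow (p q r : ℝ) (m k : ℕ) :
    ((m + 1).choose (k + 1) : ℝ) * p ^ (k + 1) * q ^ (m - k) / ((k : ℝ) + 1) ^ r
      = (m + 1) * p * (m.choose k * p ^ k * q ^ (m - k) / ((k : ℝ) + 1) ^ (r + 1)) := by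
  have hk : (0:ℝ) < k + 1 := by positivity
  have hchoose : ((m : ℝ) + 1) * m.choose k = (m + 1).choose (k + 1) * ((k : ℝ) + 1) := by
    exact_mod_cast Nat.add_one_mul_choose_eq m k
  rw [rpow_add_one hk.ne']
  field_simp
  linear_combination (-(p ^ (k + 1) * q ^ (m - k))) * hchoose

lemma sum_Icc_choose_mul_pow_div_rpow (p q r : ℝ) (m : ℕ) :
    ∑ i ∈ Icc 1 (m + 1), ((m + 1).choose i : ℝ) * p ^ i * q ^ (m + 1 - i) / (i : ℝ) ^ r
      = (m + 1) * p *
          ∑ k ∈ range (m + 1), m.choose k * p ^ k * q ^ (m - k) / ((k : ℝ) + 1) ^ (r + 1) := by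
  rw [← Ico_add_one_right_eq_Icc, ← zero_add 1, ← sum_Ico_add', zero_add, ← range_eq_Ico, mul_sum]
  refine sum_congr rfl fun k _ => ?_
  rw [Nat.add_sub_add_right]
  push_cast
  exact choose_succ_mul_pow_div_rpow p q r m k

theorem inverse_moment_binomial_integral_repr'_general
    (p q : ℝ) (n : ℕ) (r : ℝ) (hr : 0 < r) :
    ∑ i ∈ Finset.Icc 1 n, (n.choose i : ℝ) * p ^ i * q ^ (n - i) / (i : ℝ) ^ r
      = ((n : ℝ) * p / Real.Gamma (r + 1)) *
        ∫ x in Set.Ioi (0:ℝ),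
          x ^ r * Real.exp (-x) * (q + p * Real.exp (-x)) ^ (n - 1) := by
  rcases n with _ | m
  · simp
  have hGamma : Gamma (r + 1) ≠ 0 := (Gamma_pos_of_pos (by linarith)).ne'
  rw [sum_Icc_choose_mul_pow_div_rpow, Nat.add_sub_cancel,
    integral_rpow_mul_exp_neg_mul_add_mul_exp_neg_pow (by linarith)]
  push_cast
  field_simp

/-- For `p ∈ (0,1)`, `q = 1 - p`, positive integer `n` and real `r > 0`,
the `r`-th inverse moment of the positive binomial distribution satisfies
`f_r(n) = (np/Γ(r+1)) ∫₀^∞ x^r e^{-x} (q + p e^{-x})^{n-1} dx`. -/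
theorem inverse_moment_binomial_integral_repr'
    (p q : ℝ) (hp : p ∈ Set.Ioo (0:ℝ) 1) (hq : q = 1 - p)
    (n : ℕ) (hn : 0 < n) (r : ℝ) (hr : 0 < r) :
    ∑ i ∈ Finset.Icc 1 n, (n.choose i : ℝ) * p ^ i * q ^ (n - i) / (i : ℝ) ^ r
      = ((n : ℝ) * p / Real.Gamma (r + 1)) *
        ∫ x in Set.Ioi (0:ℝ),
          x ^ r * Real.exp (-x) * (q + p * Real.exp (-x)) ^ (n - 1) :=
  inverse_moment_binomial_integral_repr'_general p q n r hr
end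

section
/- Fix a positive integer n and an integer k ≥ 1. Define M_k : (0,1) → ℝ by M_k(p) = Σ_{i=0}^n C(n,i) p^i (1−p)^{n−i} (i − np)^k, the k-th central moment of the binomial distribution viewed as a function of p. Then M_k is differentiable on (0,1) and for all p ∈ (0,1): M_{k+1}(p) = p(1−p)·( M_k′(p) + n·k·M_{k−1}(p) ). -/
/-!
The binomial weight `w i p = p ^ i * (1 - p) ^ (n - i)` satisfies `p (1 - p) w' = (i - n p) w`.
Hence multiplying the derivative of `w i p * (i - n p) ^ k` by `p (1 - p)` raises the power of
`i - n p` by one, while the chain rule applied to `(i - n p) ^ k` contributes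
`-n k p (1 - p) w i p * (i - n p) ^ (k - 1)`. Summing over `i` gives the recursion.
-/

open Finset

theorem mul_one_sub_mul_deriv_pow_mul_one_sub_pow (a b : ℕ) (x : ℝ) :
    x * (1 - x) * deriv (fun x => x ^ a * (1 - x) ^ b) x =
      (a - (a + b) * x) * (x ^ a * (1 - x) ^ b) := by
  have h := ((hasDerivAt_pow a x).fun_mul ((hasDerivAt_pow b (1 - x)).comp x
    ((hasDerivAt_id x).const_sub 1))).deriv
  simp only [Function.comp_def] at h
  rw [h]
  rcases a with _ | a <;> rcases b with _ | b <;> simp <;> ring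

noncomputable def binomialCentralMoment (n j : ℕ) (p : ℝ) : ℝ :=
  ∑ i ∈ range (n + 1), (n.choose i : ℝ) * p ^ i * (1 - p) ^ (n - i) * ((i : ℝ) - n * p) ^ j

theorem differentiable_binomialCentralMoment (n j : ℕ) :
    Differentiable ℝ (binomialCentralMoment n j) := by
  unfold binomialCentralMoment
  fun_prop

theorem mul_one_sub_mul_deriv_binomialCentralMoment (n k : ℕ) (p : ℝ) :
    p * (1 - p) * deriv (binomialCentralMoment n k) p =
      binomialCentralMoment n (k + 1) p -
        n * k * (p * (1 - p)) * binomialCentralMoment n (k - 1) p := by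
  unfold binomialCentralMoment
  rw [deriv_fun_sum (fun i _ => by fun_prop), mul_sum, mul_sum, ← sum_sub_distrib]
  refine sum_congr rfl fun i hi => ?_
  have hi : i ≤ n := Nat.lt_succ_iff.mp (mem_range.mp hi)
  set w : ℝ → ℝ := fun x => x ^ i * (1 - x) ^ (n - i)
  have hw : p * (1 - p) * deriv w p = (i - n * p) * w p := by
    rw [mul_one_sub_mul_deriv_pow_mul_one_sub_pow, Nat.cast_sub hi, add_sub_cancel]
  have hu : HasDerivAt (fun x => ((i : ℝ) - n * x) ^ k)
      (-(k * (i - n * p) ^ (k - 1) * n)) p := by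
    simpa [Function.comp_def] using
      (hasDerivAt_pow k _).comp p (((hasDerivAt_id p).const_mul (n : ℝ)).const_sub (i : ℝ))
  have hterm : (fun x => (n.choose i : ℝ) * x ^ i * (1 - x) ^ (n - i) * ((i : ℝ) - n * x) ^ k) =
      fun x => (n.choose i : ℝ) * (w x * ((i : ℝ) - n * x) ^ k) := by
    funext x
    simp only [w]
    ring
  rw [hterm, (((show DifferentiableAt ℝ w p by fun_prop).hasDerivAt.fun_mul hu).const_mul _).deriv]
  simp only [w] at hw ⊢
  linear_combination (n.choose i : ℝ) * ((i : ℝ) - n * p) ^ k * hw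

theorem binomial_central_moment_recursion_in_p_general
    (n : ℕ) (k : ℕ)
    (M : ℕ → ℝ → ℝ)
    (hM : ∀ (j : ℕ) (p : ℝ), M j p =
      ∑ i ∈ Finset.range (n + 1),
        (n.choose i : ℝ) * p ^ i * (1 - p) ^ (n - i) * ((i : ℝ) - n * p) ^ j) :
    DifferentiableOn ℝ (M k) (Set.Ioo (0:ℝ) 1) ∧
    ∀ p ∈ Set.Ioo (0:ℝ) 1,
      M (k + 1) p = p * (1 - p) * (deriv (M k) p + n * k * M (k - 1) p) := by
  obtain rfl : M = binomialCentralMoment n := funext₂ hM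
  refine ⟨(differentiable_binomialCentralMoment n k).differentiableOn, fun p _ => ?_⟩
  linear_combination -(mul_one_sub_mul_deriv_binomialCentralMoment n k p)

/-- The central moments of the binomial distribution, as functions of `p`,
are differentiable on `(0,1)` and satisfy the recursion
`M_{k+1}(p) = p(1-p) (M_k'(p) + n k M_{k-1}(p))`. -/
theorem binomial_central_moment_recursion_in_p
    (n : ℕ) (hn : 0 < n) (k : ℕ) (hk : 1 ≤ k)
    (M : ℕ → ℝ → ℝ)
    (hM : ∀ (j : ℕ) (p : ℝ), M j p =
      ∑ i ∈ Finset.range (n + 1),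
        (n.choose i : ℝ) * p ^ i * (1 - p) ^ (n - i) * ((i : ℝ) - n * p) ^ j) :
    DifferentiableOn ℝ (M k) (Set.Ioo (0:ℝ) 1) ∧
    ∀ p ∈ Set.Ioo (0:ℝ) 1,
      M (k + 1) p = p * (1 - p) * (deriv (M k) p + n * k * M (k - 1) p) :=
  binomial_central_moment_recursion_in_p_general n k M hM
end

section
/- Fix p ∈ (0,1) and q = 1−p. Then there exist a constant C > 0 and a positive integer N such that for all integers n ≥ N: | f_1(n) − (1/(np))·( 1 + q/(np) + q(1+q)/(np)^2 + q(1+4q+q^2)/(np)^3 + q(1+q)(1+10q+q^2)/(np)^4 + q(1+26q+66q^2+26q^3+q^4)/(np)^5 ) | ≤ C · n^{−7}. -/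
/-!
Expand `1 / i = ∑ k < m, k! / ((i + 1) ⋯ (i + k + 1)) + m! / (i (i + 1) ⋯ (i + m))`.
Rising factorials are exact against binomial weights,
`C(n, i) p^i q^(n-i) / ((i + 1) ⋯ (i + k))
  = C(n + k, i + k) p^(i+k) q^(n-i) / ((n + 1) ⋯ (n + k) p^k)`,
so the `k`-th sum is `1 / ((n + 1) ⋯ (n + k) p^k)` up to a binomial tail of size `O(n^k q^n)`,
while the last sum is `O((np)^-(m+1))`. For `m = 6` it remains to clear denominators in the
difference between `∑ k < 6, k! / ((n + 1) ⋯ (n + k + 1) p^(k+1))` and the stated expansion: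
the numerator has degree `5` in `n`, against a denominator of degree `12`.
-/

open Finset Filter Asymptotics
open scoped Nat

noncomputable def binomTerm (p q : ℝ) (n i : ℕ) : ℝ := n.choose i * p ^ i * q ^ (n - i)

noncomputable def firstInverseMoment (p q : ℝ) (n : ℕ) : ℝ :=
  ∑ i ∈ Icc 1 n, binomTerm p q n i / i

theorem Nat.choose_add_mul_ascFactorial (n i k : ℕ) :
    (n + k).choose (i + k) * (i + 1).ascFactorial k = n.choose i * (n + 1).ascFactorial k := by
  rw [Nat.ascFactorial_eq_factorial_mul_choose, Nat.ascFactorial_eq_factorial_mul_choose,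
    mul_left_comm, Nat.choose_mul (Nat.le_add_left k i), Nat.add_sub_cancel, Nat.add_sub_cancel]
  ring

theorem Nat.ascFactorial_succ_eq_mul (n k : ℕ) :
    n.ascFactorial (k + 1) = n * (n + 1).ascFactorial k :=
  (Nat.succ_ascFactorial n k).symm

theorem Nat.succ_ascFactorial_succ_le {i : ℕ} (hi : 1 ≤ i) (m : ℕ) :
    (i + 1).ascFactorial (m + 1) ≤ (m + 2) * i.ascFactorial (m + 1) := by
  rw [Nat.ascFactorial_succ, Nat.ascFactorial_succ_eq_mul, ← mul_assoc]
  exact Nat.mul_le_mul_right _ (by nlinarith)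

theorem sum_range_succ_eq_add_sum_Icc {M : Type*} [AddCommMonoid M] (f : ℕ → M) (n : ℕ) :
    ∑ i ∈ range (n + 1), f i = f 0 + ∑ i ∈ Icc 1 n, f i := by
  rw [range_eq_Ico, sum_eq_sum_Ico_succ_bot n.succ_pos]
  rfl

theorem one_div_eq_sum_add {i : ℕ} (hi : i ≠ 0) (m : ℕ) :
    (1 : ℝ) / i = ∑ k ∈ range m, (k ! : ℝ) / (i + 1).ascFactorial (k + 1)
      + m ! / i.ascFactorial (m + 1) := by
  induction m with
  | zero => simp [Nat.ascFactorial_succ]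
  | succ m ih =>
    rw [ih, sum_range_succ, add_assoc]
    congr 1
    have hi' : (i : ℝ) ≠ 0 := by exact_mod_cast hi
    rw [Nat.ascFactorial_succ_eq_mul i (m + 1), Nat.ascFactorial_succ_eq_mul,
      Nat.ascFactorial_succ (n := i + 1)]
    have hpos := Nat.ascFactorial_pos i m
    push_cast [Nat.factorial_succ]
    field_simp
    ring

theorem isBigO_pow_mul_geometric {r : ℝ} (hr : |r| < 1) (a b : ℕ) :
    (fun n : ℕ => (n : ℝ) ^ a * r ^ n) =O[atTop] fun n => ((n : ℝ) ^ b)⁻¹ := by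
  have hlim := tendsto_pow_const_mul_const_pow_of_abs_lt_one (a + b) hr
  have hinv := isBigO_refl (fun n : ℕ => ((n : ℝ) ^ b)⁻¹) atTop
  refine ((hlim.isBigO_one ℝ).mul hinv).congr' ?_ ?_
  · filter_upwards [eventually_ne_atTop 0] with n hn
    have : (n : ℝ) ≠ 0 := by exact_mod_cast hn
    field_simp
    ring
  · simp

section BinomialWeights

variable {p q : ℝ}

theorem sum_range_binomTerm (hpq : p + q = 1) (n : ℕ) :
    ∑ i ∈ range (n + 1), binomTerm p q n i = 1 := by
  rw [← one_pow (M := ℝ) n, ← hpq, add_pow]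
  exact sum_congr rfl fun i _ => by simp only [binomTerm]; ring

theorem binomTerm_div_ascFactorial (hp : p ≠ 0) (n i k : ℕ) :
    binomTerm p q n i / (i + 1).ascFactorial k
      = binomTerm p q (n + k) (i + k) / ((n + 1).ascFactorial k * p ^ k) := by
  have hi := Nat.ascFactorial_pos i k
  have hn := Nat.ascFactorial_pos n k
  have hchoose : ((n + k).choose (i + k) : ℝ) * (i + 1).ascFactorial k
      = n.choose i * (n + 1).ascFactorial k := by
    exact_mod_cast Nat.choose_add_mul_ascFactorial n i k
  rw [div_eq_div_iff (by positivity) (by positivity)]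
  simp only [binomTerm, Nat.add_sub_add_right, pow_add]
  linear_combination p ^ i * p ^ k * q ^ (n - i) * hchoose.symm

theorem sum_binomTerm_div_ascFactorial (hp : p ≠ 0) (hpq : p + q = 1) (n k : ℕ) :
    ∑ i ∈ range (n + 1), binomTerm p q n i / (i + 1).ascFactorial k
      = (1 - ∑ j ∈ range k, binomTerm p q (n + k) j) / ((n + 1).ascFactorial k * p ^ k) := by
  simp_rw [binomTerm_div_ascFactorial hp, ← sum_div]
  have htotal := sum_range_binomTerm hpq (n + k)
  rw [show n + k + 1 = k + (n + 1) by omega, sum_range_add] at htotal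
  rw [← htotal]
  simp [add_comm]

theorem sum_range_binomTerm_add_le (hp0 : 0 ≤ p) (hp1 : p ≤ 1) (hq0 : 0 ≤ q) (hq1 : q ≤ 1)
    {n : ℕ} (hn : 1 ≤ n) (k : ℕ) :
    ∑ j ∈ range k, binomTerm p q (n + k) j ≤ k * ((k + 1) ^ k * q ^ n) * (n : ℝ) ^ k := by
  have hterm :
      ∀ j ∈ range k, binomTerm p q (n + k) j ≤ (k + 1) ^ k * q ^ n * (n : ℝ) ^ k := by
    intro j hj
    have hjk : j ≤ k := (mem_range.mp hj).le
    have hchoose : ((n + k).choose j : ℝ) ≤ ((k + 1) * n : ℝ) ^ k := by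
      calc ((n + k).choose j : ℝ) ≤ ((n + k : ℕ) : ℝ) ^ j := by
            exact_mod_cast Nat.choose_le_pow _ _
        _ ≤ ((n + k : ℕ) : ℝ) ^ k := pow_le_pow_right₀ (by norm_cast; omega) hjk
        _ ≤ ((k + 1) * n : ℝ) ^ k := by
          gcongr
          have : (1 : ℝ) ≤ n := by exact_mod_cast hn
          push_cast; nlinarith
    calc binomTerm p q (n + k) j ≤ ((k + 1) * n : ℝ) ^ k * 1 * q ^ n := by
          have hpj : p ^ j ≤ 1 := pow_le_one₀ hp0 hp1
          have hqn : q ^ (n + k - j) ≤ q ^ n := pow_le_pow_of_le_one hq0 hq1 (by omega)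
          unfold binomTerm
          gcongr
      _ = (k + 1) ^ k * q ^ n * (n : ℝ) ^ k := by rw [mul_pow]; ring
  calc ∑ j ∈ range k, binomTerm p q (n + k) j
      ≤ ∑ _j ∈ range k, (k + 1) ^ k * q ^ n * (n : ℝ) ^ k :=
        sum_le_sum hterm
    _ = k * ((k + 1) ^ k * q ^ n) * (n : ℝ) ^ k := by simp [mul_assoc]

theorem firstInverseMoment_eq_sum_add (n m : ℕ) :
    firstInverseMoment p q n
      = ∑ k ∈ range m,
          (k ! : ℝ) * ∑ i ∈ Icc 1 n, binomTerm p q n i / (i + 1).ascFactorial (k + 1)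
        + m ! * ∑ i ∈ Icc 1 n, binomTerm p q n i / i.ascFactorial (m + 1) := by
  have hsplit : ∀ i ∈ Icc 1 n, binomTerm p q n i / i
      = ∑ k ∈ range m, (k ! : ℝ) * (binomTerm p q n i / (i + 1).ascFactorial (k + 1))
        + m ! * (binomTerm p q n i / i.ascFactorial (m + 1)) := by
    intro i hi
    rw [div_eq_mul_one_div, one_div_eq_sum_add (by simp at hi; omega) m, mul_add, mul_sum]
    congr 1
    · exact sum_congr rfl fun k _ => by ring
    · ring
  simp_rw [firstInverseMoment, sum_congr rfl hsplit, sum_add_distrib, mul_sum]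
  rw [sum_comm]

theorem isBigO_sum_Icc_binomTerm_div_ascFactorial_sub (hp : 0 < p) (hq : 0 ≤ q)
    (hpq : p + q = 1) (k b : ℕ) :
    (fun n : ℕ => ∑ i ∈ Icc 1 n, binomTerm p q n i / (i + 1).ascFactorial k
        - 1 / ((n + 1).ascFactorial k * p ^ k)) =O[atTop] fun n => ((n : ℝ) ^ b)⁻¹ := by
  have hq1 : |q| < 1 := by rw [abs_of_nonneg hq]; linarith
  refine IsBigO.trans ?_ (isBigO_pow_mul_geometric hq1 k b)
  refine IsBigO.of_bound (k * (k + 1) ^ k / p ^ k + 1) ?_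
  filter_upwards [eventually_ge_atTop 1] with n hn
  set t := ∑ j ∈ range k, binomTerm p q (n + k) j
  have ht0 : 0 ≤ t := sum_nonneg fun j _ => by unfold binomTerm; positivity
  have ht := sum_range_binomTerm_add_le hp.le (by linarith) hq (by linarith) hn k
  have hD : (1 : ℝ) ≤ (n + 1).ascFactorial k := by exact_mod_cast Nat.ascFactorial_pos n k
  have hfact : (1 : ℝ) ≤ k ! := by exact_mod_cast Nat.factorial_pos k
  have hnk : (1 : ℝ) ≤ (n : ℝ) ^ k := one_le_pow₀ (by exact_mod_cast hn)
  have hvalue : ∑ i ∈ Icc 1 n, binomTerm p q n i / (i + 1).ascFactorial k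
        - 1 / ((n + 1).ascFactorial k * p ^ k)
      = -(t / ((n + 1).ascFactorial k * p ^ k) + q ^ n / k !) := by
    have hsum :=
      sum_range_succ_eq_add_sum_Icc (fun i => binomTerm p q n i / (i + 1).ascFactorial k) n
    have h0 : binomTerm p q n 0 / (0 + 1).ascFactorial k = q ^ n / k ! := by simp [binomTerm]
    beta_reduce at hsum
    rw [sum_binomTerm_div_ascFactorial hp.ne' hpq, h0, sub_div] at hsum
    linarith
  rw [hvalue, norm_neg, Real.norm_of_nonneg (by positivity), Real.norm_of_nonneg (by positivity)]
  have h1 : t / ((n + 1).ascFactorial k * p ^ k) ≤ t / p ^ k :=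
    div_le_div_of_nonneg_left ht0 (by positivity) (le_mul_of_one_le_left (by positivity) hD)
  have h2 : q ^ n / k ! ≤ q ^ n := div_le_self (by positivity) hfact
  have h3 : t / p ^ k ≤ k * (k + 1) ^ k / p ^ k * (q ^ n * n ^ k) := by
    rw [div_mul_eq_mul_div, div_le_div_iff_of_pos_right (by positivity)]
    linarith
  nlinarith [pow_nonneg hq n]

theorem sum_Icc_binomTerm_div_ascFactorial_le (hp : 0 < p) (hq : 0 ≤ q) (hpq : p + q = 1)
    (n m : ℕ) :
    ∑ i ∈ Icc 1 n, binomTerm p q n i / i.ascFactorial (m + 1)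
      ≤ (m + 2) / ((n : ℝ) ^ (m + 1) * p ^ (m + 1)) := by
  rcases n.eq_zero_or_pos with rfl | hn
  · simp
  have hterm : ∀ i ∈ Icc 1 n, binomTerm p q n i / i.ascFactorial (m + 1)
      ≤ (m + 2) * (binomTerm p q n i / (i + 1).ascFactorial (m + 1)) := by
    intro i hi
    have hi1 : 1 ≤ i := (mem_Icc.mp hi).1
    have hpos : (0 : ℝ) < i.ascFactorial (m + 1) := by
      obtain ⟨j, rfl⟩ := Nat.exists_eq_add_of_le' hi1
      exact_mod_cast Nat.ascFactorial_pos j (m + 1)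
    have hle : ((i + 1).ascFactorial (m + 1) : ℝ) ≤ (m + 2) * i.ascFactorial (m + 1) := by
      exact_mod_cast Nat.succ_ascFactorial_succ_le hi1 m
    rw [mul_div_assoc', div_le_div_iff₀ hpos (by positivity)]
    have : 0 ≤ binomTerm p q n i := by unfold binomTerm; positivity
    nlinarith
  have hsub : Icc 1 n ⊆ range (n + 1) := fun i hi => mem_range.mpr (by simp at hi; omega)
  have hnonneg : ∀ i ∈ range (n + 1), 0 ≤ binomTerm p q n i / (i + 1).ascFactorial (m + 1) :=
    fun i _ => by unfold binomTerm; positivity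
  have ht : 0 ≤ ∑ j ∈ range (m + 1), binomTerm p q (n + (m + 1)) j :=
    sum_nonneg fun j _ => by unfold binomTerm; positivity
  have hD : ((n : ℝ) ^ (m + 1)) ≤ (n + 1).ascFactorial (m + 1) := by
    exact_mod_cast (Nat.pow_le_pow_left n.le_succ _).trans (Nat.pow_succ_le_ascFactorial _ _)
  calc ∑ i ∈ Icc 1 n, binomTerm p q n i / i.ascFactorial (m + 1)
      ≤ (m + 2) * ∑ i ∈ Icc 1 n, binomTerm p q n i / (i + 1).ascFactorial (m + 1) := by
        rw [mul_sum]; exact sum_le_sum hterm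
    _ ≤ (m + 2) * ∑ i ∈ range (n + 1), binomTerm p q n i / (i + 1).ascFactorial (m + 1) := by
        gcongr ?_ * ?_
        exact sum_le_sum_of_subset_of_nonneg hsub fun i hi _ => hnonneg i hi
    _ ≤ (m + 2) / ((n : ℝ) ^ (m + 1) * p ^ (m + 1)) := by
        rw [sum_binomTerm_div_ascFactorial hp.ne' hpq, mul_div_assoc']
        exact div_le_div₀ (by positivity) (by nlinarith) (by positivity) (by gcongr)

theorem isBigO_firstInverseMoment_sub_sum (hp : 0 < p) (hq : 0 ≤ q) (hpq : p + q = 1) (m : ℕ) :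
    (fun n : ℕ => firstInverseMoment p q n
        - ∑ k ∈ range m, (k ! : ℝ) / ((n + 1).ascFactorial (k + 1) * p ^ (k + 1)))
      =O[atTop] fun n => ((n : ℝ) ^ (m + 1))⁻¹ := by
  have hdecomp : ∀ n : ℕ, firstInverseMoment p q n
        - ∑ k ∈ range m, (k ! : ℝ) / ((n + 1).ascFactorial (k + 1) * p ^ (k + 1))
      = ∑ k ∈ range m, (k ! : ℝ)
          * (∑ i ∈ Icc 1 n, binomTerm p q n i / (i + 1).ascFactorial (k + 1)
            - 1 / ((n + 1).ascFactorial (k + 1) * p ^ (k + 1)))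
        + m ! * ∑ i ∈ Icc 1 n, binomTerm p q n i / i.ascFactorial (m + 1) := by
    intro n
    rw [firstInverseMoment_eq_sum_add n m]
    simp only [mul_sub, sum_sub_distrib, mul_one_div]
    ring
  simp_rw [hdecomp]
  refine IsBigO.add (IsBigO.fun_sum fun k _ => ?_) ?_
  · exact (isBigO_sum_Icc_binomTerm_div_ascFactorial_sub hp hq hpq (k + 1) (m + 1)).const_mul_left
      _
  · refine IsBigO.const_mul_left (IsBigO.of_bound ((m + 2) / p ^ (m + 1)) ?_) _
    filter_upwards [eventually_ge_atTop 1] with n hn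
    have hR := sum_Icc_binomTerm_div_ascFactorial_le hp hq hpq n m
    have hR0 : 0 ≤ ∑ i ∈ Icc 1 n, binomTerm p q n i / i.ascFactorial (m + 1) :=
      sum_nonneg fun i _ => by unfold binomTerm; positivity
    rw [Real.norm_of_nonneg hR0, Real.norm_of_nonneg (by positivity)]
    convert hR using 1
    field_simp

end BinomialWeights

theorem abs_sum_mul_pow_mul_pow_le {d e : ℕ} (c : Fin (d + 1) → Fin e → ℝ) {x y : ℝ}
    (hx : 1 ≤ x) (hy0 : 0 ≤ y) (hy1 : y ≤ 1) :
    |∑ a, ∑ b, c a b * x ^ (a : ℕ) * y ^ (b : ℕ)| ≤ (∑ a, ∑ b, |c a b|) * x ^ d := by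
  rw [sum_mul]
  refine (abs_sum_le_sum_abs _ _).trans (sum_le_sum fun a _ => ?_)
  rw [sum_mul]
  refine (abs_sum_le_sum_abs _ _).trans (sum_le_sum fun b _ => ?_)
  rw [abs_mul, abs_mul, abs_of_nonneg (by positivity : (0 : ℝ) ≤ x ^ (a : ℕ)),
    abs_of_nonneg (pow_nonneg hy0 _), mul_assoc]
  gcongr
  calc x ^ (a : ℕ) * y ^ (b : ℕ) ≤ x ^ d * 1 :=
        mul_le_mul (pow_le_pow_right₀ hx (Nat.lt_succ_iff.mp a.isLt)) (pow_le_one₀ hy0 hy1)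
          (by positivity) (by positivity)
    _ = x ^ d := mul_one _

noncomputable def firstInverseMomentExpansion (p q x : ℝ) : ℝ :=
  (1 / (x * p)) *
    (1 + q / (x * p)
      + q * (1 + q) / (x * p) ^ 2
      + q * (1 + 4 * q + q ^ 2) / (x * p) ^ 3
      + q * (1 + q) * (1 + 10 * q + q ^ 2) / (x * p) ^ 4
      + q * (1 + 26 * q + 66 * q ^ 2 + 26 * q ^ 3 + q ^ 4) / (x * p) ^ 5)

def expansionErrorCoeff : Matrix (Fin 6) (Fin 6) ℝ :=
  !![-86400, 259200, -280800, 129600, -22320, 720;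
    -211680, 617760, -644760, 281520, -43884, 1044;
    -194880, 542304, -531840, 212760, -28924, 580;
    -88200, 225624, -199794, 70828, -8613, 155;
    -21000, 45360, -33894, 10710, -1196, 20;
    -2520, 3360, -2100, 602, -63, 1]

theorem sum_sub_firstInverseMomentExpansion_eq {p : ℝ} (hp : p ≠ 0) {n : ℕ} (hn : n ≠ 0) :
    ∑ k ∈ range 6, (k ! : ℝ) / ((n + 1).ascFactorial (k + 1) * p ^ (k + 1))
        - firstInverseMomentExpansion p (1 - p) n
      = (∑ a, ∑ b, expansionErrorCoeff a b * (n : ℝ) ^ (a : ℕ) * p ^ (b : ℕ))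
        / ((n : ℝ) ^ 6 * p ^ 6 * (n + 1).ascFactorial 6) := by
  have hn' : (n : ℝ) ≠ 0 := by exact_mod_cast hn
  simp only [expansionErrorCoeff, firstInverseMomentExpansion, sum_range_succ, range_zero,
    sum_empty, Nat.ascFactorial_succ, Nat.ascFactorial_zero, Nat.factorial, Fin.sum_univ_succ,
    Fin.sum_univ_zero, Matrix.of_apply, Matrix.cons_val', Matrix.cons_val_zero,
    Matrix.cons_val_succ, Matrix.cons_val_fin_one, Fin.val_zero, Fin.val_succ]
  push_cast
  field_simp
  ring

theorem isBigO_sum_sub_firstInverseMomentExpansion {p : ℝ} (hp0 : 0 < p) (hp1 : p ≤ 1) :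
    (fun n : ℕ => ∑ k ∈ range 6, (k ! : ℝ) / ((n + 1).ascFactorial (k + 1) * p ^ (k + 1))
        - firstInverseMomentExpansion p (1 - p) n) =O[atTop] fun n => ((n : ℝ) ^ 7)⁻¹ := by
  set K := ∑ a, ∑ b, |expansionErrorCoeff a b|
  refine IsBigO.of_bound (K / p ^ 6) ?_
  filter_upwards [eventually_ge_atTop 1] with n hn
  have hx : (1 : ℝ) ≤ n := by exact_mod_cast hn
  have hnum := abs_sum_mul_pow_mul_pow_le expansionErrorCoeff hx hp0.le hp1
  have hden : (n : ℝ) ^ 6 ≤ (n + 1).ascFactorial 6 := by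
    exact_mod_cast (Nat.pow_le_pow_left n.le_succ _).trans (Nat.pow_succ_le_ascFactorial _ _)
  have hpos : (0 : ℝ) < (n : ℝ) ^ 6 * p ^ 6 * (n + 1).ascFactorial 6 := by positivity
  rw [sum_sub_firstInverseMomentExpansion_eq hp0.ne' (by omega), Real.norm_eq_abs, abs_div,
    abs_of_pos hpos, norm_inv, norm_pow, Real.norm_natCast]
  calc |∑ a, ∑ b, expansionErrorCoeff a b * (n : ℝ) ^ (a : ℕ) * p ^ (b : ℕ)|
        / ((n : ℝ) ^ 6 * p ^ 6 * (n + 1).ascFactorial 6)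
      ≤ K * (n : ℝ) ^ 5 / ((n : ℝ) ^ 6 * p ^ 6 * (n : ℝ) ^ 6) := by
        gcongr
    _ = K / p ^ 6 * ((n : ℝ) ^ 7)⁻¹ := by
        field_simp

/-- Expansion of the first inverse moment of the positive binomial
distribution in inverse powers of `np`, with error `O(n^{-7})`. -/
theorem first_inverse_moment_binomial_expansion
    (p q : ℝ) (hp : p ∈ Set.Ioo (0:ℝ) 1) (hq : q = 1 - p) :
    ∃ C > (0:ℝ), ∃ N : ℕ, 0 < N ∧ ∀ n : ℕ, N ≤ n →
      |(∑ i ∈ Finset.Icc 1 n, (n.choose i : ℝ) * p ^ i * q ^ (n - i) / (i : ℝ))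
        - (1 / ((n : ℝ) * p)) *
            (1 + q / ((n : ℝ) * p)
              + q * (1 + q) / ((n : ℝ) * p) ^ 2
              + q * (1 + 4 * q + q ^ 2) / ((n : ℝ) * p) ^ 3
              + q * (1 + q) * (1 + 10 * q + q ^ 2) / ((n : ℝ) * p) ^ 4
              + q * (1 + 26 * q + 66 * q ^ 2 + 26 * q ^ 3 + q ^ 4) / ((n : ℝ) * p) ^ 5)|
      ≤ C / (n : ℝ) ^ 7 := by
  obtain ⟨hp0, hp1⟩ := hp
  subst hq
  have hexpansion : (fun n : ℕ => firstInverseMoment p (1 - p) n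
      - firstInverseMomentExpansion p (1 - p) n) =O[atTop] fun n => ((n : ℝ) ^ 7)⁻¹ :=
    ((isBigO_firstInverseMoment_sub_sum hp0 (by linarith) (by ring) 6).add
      (isBigO_sum_sub_firstInverseMomentExpansion hp0 hp1.le)).congr_left
      fun n => sub_add_sub_cancel _ _ _
  obtain ⟨C, hC, hbound⟩ := hexpansion.exists_pos
  obtain ⟨N, hN⟩ := eventually_atTop.mp hbound.bound
  refine ⟨C, hC, N + 1, N.succ_pos, fun n hn => ?_⟩
  have h := hN n (by omega)
  rw [Real.norm_eq_abs, norm_inv, norm_pow, Real.norm_natCast, ← div_eq_mul_inv] at h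
  exact h
end

section
/- Fix a real r > 0 and an integer P ≥ 1. Then there exist a constant C > 0 and a real M₀ > 0 such that for all m ≥ M₀: | g_r(m) − (m/(m+1)^{r+1}) · Σ_{k=0}^{P−1} (−1)^k · C(r+k,k) · μ̃_k(m)/(m+1)^k | ≤ C · (m/(m+1)^{r+1}) · m^{−⌈P/2⌉}. That is, g_r(m) admits the asymptotic expansion g_r = (m/(m+1)^{r+1}) { Σ_{k=0}^{P−1} (−1)^k C(r+k,k) μ̃_k/(m+1)^k + O(1/m^{⌈P/2⌉}) }. -/
/-!
Write `X = (S - m) / (m + 1)` for `S ~ Poisson(m)`. Since `1 + X = (S + 1) / (m + 1)` and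
`ℙ(S = s + 1) = m ℙ(S = s) / (s + 1)`, one has `g_r(m) = m / (m + 1)^(r+1) · E[(1 + X)^(-(r+1))]`,
while the sum in the expansion is `E` of the degree `P - 1` Taylor polynomial of
`(1 + x)^(-(r+1))` at `X`. The error is therefore `m / (m + 1)^(r+1) · E[R_P(X)]` for the Taylor
remainder `R_P`, and it suffices to show `E[R_P(X)] = O(m^(-⌈P/2⌉))`.

The central moments obey `μ_(k+1) = m Σ_(j<k) C(k,j) μ_j`, so `μ_k = O(m^⌊k/2⌋)` and
`E[X^k] = O(m^(-⌈k/2⌉))`. Split `R_P = c_P x^P + R_(P+1)`; the first term contributes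
`c_P E[X^P] = O(m^(-⌈P/2⌉))`. For the second, `|R_(P+1)(x)| = O(|x|^(P+1))` for `x ≥ -1/2` by the
mean value theorem, and for `-1 < x < -1/2`, where `(1 + x)^(-(r+1))` can be as large as
`(m + 1)^(r+1)`, it is `O(x^(2N) (1 + x)^(-(r+1)))`; the high moment `E[X^(2N)] = O(m^(-N))`
absorbs that factor once `N ≥ ⌈r + 1⌉ + ⌈P/2⌉`.
-/

open Real Finset Filter Asymptotics
open scoped Nat

noncomputable section

lemma isBigO_pow_pow_atTop_of_le {i j : ℕ} (h : i ≤ j) :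
    (fun m : ℝ => m ^ i) =O[atTop] fun m => m ^ j := by
  refine .of_bound' ?_
  filter_upwards [eventually_ge_atTop 1] with m hm
  simp only [norm_pow, Real.norm_of_nonneg (zero_le_one.trans hm)]
  exact pow_le_pow_right₀ hm h

lemma isBigO_inv_pow_inv_pow_of_le {i j : ℕ} (h : i ≤ j) :
    (fun m : ℝ => (m ^ j)⁻¹) =O[atTop] fun m => (m ^ i)⁻¹ := by
  refine .of_bound' ?_
  filter_upwards [eventually_ge_atTop 1] with m hm
  simp only [norm_inv, norm_pow, Real.norm_of_nonneg (zero_le_one.trans hm)]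
  exact inv_anti₀ (by positivity) (pow_le_pow_right₀ hm h)

def poissonWeight (m : ℝ) (s : ℕ) : ℝ := exp (-m) * m ^ s / s !

def poissonCentralMoment (m : ℝ) (k : ℕ) : ℝ := ∑' s, poissonWeight m s * ((s : ℝ) - m) ^ k

section PoissonMoments

variable {m : ℝ}

lemma poissonWeight_nonneg (hm : 0 ≤ m) (s : ℕ) : 0 ≤ poissonWeight m s := by
  unfold poissonWeight; positivity

lemma poissonWeight_succ_mul (m : ℝ) (s : ℕ) :
    poissonWeight m (s + 1) * (s + 1) = m * poissonWeight m s := by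
  simp only [poissonWeight, Nat.factorial_succ, Nat.cast_mul, Nat.cast_succ]
  field_simp
  ring

lemma hasSum_poissonWeight (hm : 0 ≤ m) : HasSum (poissonWeight m) 1 := by
  have h := ProbabilityTheory.hasSum_one_poissonMeasure m.toNNReal
  rwa [Real.coe_toNNReal _ hm] at h

lemma summable_poissonWeight_mul_of_abs_le {f : ℕ → ℝ} {A : ℝ} (hm : 0 ≤ m)
    (hf : ∀ s, |f s| ≤ A * exp s) : Summable fun s => poissonWeight m s * f s := by
  refine .of_norm_bounded ((Real.summable_pow_div_factorial (m * exp 1)).mul_left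
    (exp (-m) * A)) fun s => ?_
  rw [norm_mul, Real.norm_of_nonneg (poissonWeight_nonneg hm s), Real.norm_eq_abs]
  calc poissonWeight m s * |f s| ≤ poissonWeight m s * (A * exp s) := by
        gcongr
        exacts [poissonWeight_nonneg hm s, hf s]
    _ = exp (-m) * A * ((m * exp 1) ^ s / s !) := by
        rw [poissonWeight, mul_pow, exp_one_pow]; ring

lemma summable_poissonWeight_mul_sub_pow (hm : 0 ≤ m) (k : ℕ) :
    Summable fun s => poissonWeight m s * ((s : ℝ) - m) ^ k := by
  refine summable_poissonWeight_mul_of_abs_le (A := k ! * exp m) hm fun s => ?_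
  have hs : |(s : ℝ) - m| ≤ s + m := abs_le.2 ⟨by linarith [s.cast_nonneg (α := ℝ)], by linarith⟩
  have hexp := pow_div_factorial_le_exp (x := (s : ℝ) + m) (by positivity) k
  rw [div_le_iff₀' (by positivity), exp_add] at hexp
  calc |((s : ℝ) - m) ^ k| = |(s : ℝ) - m| ^ k := abs_pow _ _
    _ ≤ ((s : ℝ) + m) ^ k := by gcongr
    _ ≤ k ! * exp m * exp s := by linarith

lemma hasSum_poissonCentralMoment (hm : 0 ≤ m) (k : ℕ) :
    HasSum (fun s => poissonWeight m s * ((s : ℝ) - m) ^ k) (poissonCentralMoment m k) :=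
  (summable_poissonWeight_mul_sub_pow hm k).hasSum

lemma poissonCentralMoment_zero (hm : 0 ≤ m) : poissonCentralMoment m 0 = 1 := by
  simpa [poissonCentralMoment] using (hasSum_poissonWeight hm).tsum_eq

lemma poissonCentralMoment_succ (hm : 0 ≤ m) (k : ℕ) :
    poissonCentralMoment m (k + 1) =
      m * ∑ j ∈ range k, (k.choose j : ℝ) * poissonCentralMoment m j := by
  have hshifted : HasSum (fun s : ℕ => poissonWeight m s * ((s : ℝ) + 1 - m) ^ k)
      (∑ j ∈ range (k + 1), (k.choose j : ℝ) * poissonCentralMoment m j) := by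
    refine (hasSum_sum fun j (_ : j ∈ range (k + 1)) =>
      (hasSum_poissonCentralMoment hm j).mul_left (k.choose j : ℝ)).congr_fun fun s => ?_
    rw [add_sub_right_comm, add_pow, mul_sum]
    exact sum_congr rfl fun j _ => by ring
  -- size biasing: `s ℙ(S = s) = m ℙ(S = s - 1)`, so `E[S (S - m)^k] = m E[(S + 1 - m)^k]`
  have hbiased : HasSum (fun s : ℕ => poissonWeight m s * (s * ((s : ℝ) - m) ^ k))
      (m * ∑ j ∈ range (k + 1), (k.choose j : ℝ) * poissonCentralMoment m j) := by
    rw [← hasSum_nat_add_iff' 1, sum_range_one]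
    simp only [Nat.cast_zero, zero_mul, mul_zero, sub_zero]
    refine (hshifted.mul_left m).congr_fun fun s => ?_
    push_cast
    rw [← mul_assoc, poissonWeight_succ_mul]
    ring
  have h := (hbiased.sub ((hasSum_poissonCentralMoment hm k).mul_left m)).congr_fun
    fun s => show poissonWeight m s * ((s : ℝ) - m) ^ (k + 1) = _ by ring
  rw [(hasSum_poissonCentralMoment hm (k + 1)).unique h, sum_range_succ, Nat.choose_self]
  ring


theorem poissonCentralMoment_isBigO (k : ℕ) :
    (fun m => poissonCentralMoment m k) =O[atTop] fun m => m ^ (k / 2) := by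
  induction k using Nat.strong_induction_on with
  | _ k ih =>
  match k with
  | 0 =>
    refine (isBigO_const_const (1 : ℝ) one_ne_zero atTop).congr' ?_ (by simp)
    filter_upwards [eventually_ge_atTop 0] with m hm
    exact (poissonCentralMoment_zero hm).symm
  | 1 =>
    refine (isBigO_zero _ _).congr' ?_ EventuallyEq.rfl
    filter_upwards [eventually_ge_atTop 0] with m hm
    simp [poissonCentralMoment_succ hm 0]
  | n + 2 =>
    have hsum : (fun m => ∑ j ∈ range (n + 1), ((n + 1).choose j : ℝ) * poissonCentralMoment m j)
        =O[atTop] fun m => m ^ (n / 2) :=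
      IsBigO.fun_sum fun j hj => ((ih j (by grind)).trans
        (isBigO_pow_pow_atTop_of_le (by grind))).const_mul_left _
    refine ((isBigO_refl (fun m : ℝ => m) atTop).mul hsum).congr' ?_ ?_
    · filter_upwards [eventually_ge_atTop 0] with m hm
      exact (poissonCentralMoment_succ hm _).symm
    · filter_upwards with m
      rw [show (n + 2) / 2 = n / 2 + 1 by omega, pow_succ']

def scaledDeviation (m : ℝ) (s : ℕ) : ℝ := ((s : ℝ) - m) / (m + 1)

lemma hasSum_poissonWeight_mul_scaledDeviation_pow (hm : 0 ≤ m) (k : ℕ) :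
    HasSum (fun s => poissonWeight m s * scaledDeviation m s ^ k)
      (poissonCentralMoment m k / (m + 1) ^ k) :=
  ((hasSum_poissonCentralMoment hm k).div_const _).congr_fun fun s => by
    rw [scaledDeviation, div_pow, mul_div_assoc]

theorem poissonCentralMoment_div_pow_isBigO (k : ℕ) :
    (fun m => poissonCentralMoment m k / (m + 1) ^ k) =O[atTop]
      fun m => (m ^ ((k + 1) / 2))⁻¹ := by
  have hinv : (fun m : ℝ => ((m + 1) ^ k)⁻¹) =O[atTop] fun m => (m ^ k)⁻¹ := by
    refine .of_bound' ?_
    filter_upwards [eventually_gt_atTop 0] with m hm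
    simp only [norm_inv, norm_pow, Real.norm_of_nonneg hm.le,
      Real.norm_of_nonneg (by linarith : 0 ≤ m + 1)]
    exact inv_anti₀ (by positivity) (pow_le_pow_left₀ hm.le (by linarith) k)
  refine ((poissonCentralMoment_isBigO k).mul hinv).congr'
    (.of_eq (funext fun m => (div_eq_mul_inv _ _).symm)) ?_
  filter_upwards [eventually_gt_atTop 0] with m hm
  have hsplit : m ^ k = m ^ (k / 2) * m ^ ((k + 1) / 2) := by rw [← pow_add]; congr 1; omega
  rw [hsplit]
  field_simp

end PoissonMoments

def invPowCoeff (a : ℝ) (k : ℕ) : ℝ := (-1) ^ k * (∏ j ∈ range k, (a + j)) / k !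

def invPowRemainder (a : ℝ) (n : ℕ) (x : ℝ) : ℝ :=
  (1 + x) ^ (-a) - ∑ k ∈ range n, invPowCoeff a k * x ^ k

lemma succ_mul_invPowCoeff_succ (a : ℝ) (k : ℕ) :
    (k + 1) * invPowCoeff a (k + 1) = -a * invPowCoeff (a + 1) k := by
  simp only [invPowCoeff, prod_range_succ', Nat.factorial_succ, Nat.cast_mul, Nat.cast_succ,
    CharP.cast_eq_zero, add_zero, pow_succ]
  have hprod : ∏ j ∈ range k, (a + ((j : ℝ) + 1)) = ∏ j ∈ range k, (a + 1 + j) :=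
    prod_congr rfl fun j _ => by ring
  rw [hprod]
  field_simp

lemma invPowRemainder_eq_add_succ (a : ℝ) (n : ℕ) (x : ℝ) :
    invPowRemainder a n x = invPowCoeff a n * x ^ n + invPowRemainder a (n + 1) x := by
  simp only [invPowRemainder, sum_range_succ]
  ring

lemma invPowRemainder_succ_zero (a : ℝ) (n : ℕ) : invPowRemainder a (n + 1) 0 = 0 := by
  simp [invPowRemainder, sum_range_succ', invPowCoeff]

lemma hasDerivAt_invPowRemainder (a : ℝ) (n : ℕ) {x : ℝ} (hx : -1 < x) :
    HasDerivAt (invPowRemainder a (n + 1)) (-a * invPowRemainder (a + 1) n x) x := by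
  have hpow : HasDerivAt (fun y => (1 + y) ^ (-a)) (-a * (1 + x) ^ (-(a + 1))) x :=
    (((hasDerivAt_id' x).const_add 1).rpow_const (Or.inl (by linarith))).congr_deriv
      (by rw [neg_add', one_mul])
  have hpoly : HasDerivAt (fun y => ∑ k ∈ range (n + 1), invPowCoeff a k * y ^ k)
      (∑ k ∈ range n, -a * invPowCoeff (a + 1) k * x ^ k) x := by
    refine (HasDerivAt.fun_sum fun k (_ : k ∈ range (n + 1)) =>
      (hasDerivAt_pow k x).const_mul (invPowCoeff a k)).congr_deriv ?_
    rw [sum_range_succ']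
    simp only [Nat.cast_zero, zero_mul, mul_zero, add_zero, Nat.cast_add, Nat.cast_one,
      Nat.add_sub_cancel, ← succ_mul_invPowCoeff_succ]
    exact sum_congr rfl fun k _ => by ring
  refine (hpow.sub hpoly).congr_deriv ?_
  rw [invPowRemainder, mul_sub, mul_sum]
  simp only [mul_assoc]

lemma exists_abs_invPowRemainder_le_of_neg_half_le (n : ℕ) {a : ℝ} (ha : 0 ≤ a) :
    ∃ K ≥ 0, ∀ x : ℝ, -(1 / 2) ≤ x → |invPowRemainder a n x| ≤ K * |x| ^ n := by
  induction n generalizing a with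
  | zero =>
    refine ⟨(1 / 2) ^ (-a), by positivity, fun x hx => ?_⟩
    rw [invPowRemainder, sum_range_zero, sub_zero, pow_zero, mul_one,
      abs_of_nonneg (rpow_nonneg (by linarith) _)]
    exact rpow_le_rpow_of_nonpos (by norm_num) (by linarith) (by linarith)
  | succ n ih =>
    obtain ⟨K, hK0, hK⟩ := ih (a := a + 1) (by linarith)
    refine ⟨a * K, by positivity, fun x hx => ?_⟩
    have hseg : ∀ t ∈ Set.uIcc 0 x, -(1 / 2) ≤ t ∧ |t| ≤ |x| := fun t ht =>
      ⟨by rcases Set.mem_uIcc.1 ht with h | h <;> linarith,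
        by simpa using Set.abs_sub_left_of_mem_uIcc ht⟩
    have hmvt := (convex_uIcc (0 : ℝ) x).norm_image_sub_le_of_norm_hasDerivWithin_le
      (C := a * (K * |x| ^ n))
      (fun t ht => (hasDerivAt_invPowRemainder a n (by linarith [(hseg t ht).1])).hasDerivWithinAt)
      (fun t ht => ?_) Set.left_mem_uIcc Set.right_mem_uIcc
    · simpa [invPowRemainder_succ_zero, pow_succ, mul_assoc] using hmvt
    · rw [norm_mul, norm_neg, Real.norm_of_nonneg ha, Real.norm_eq_abs]
      gcongr
      exact (hK t (hseg t ht).1).trans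
        (mul_le_mul_of_nonneg_left (pow_le_pow_left₀ (abs_nonneg t) (hseg t ht).2 n) hK0)

lemma exists_abs_invPowRemainder_le (n N : ℕ) {a : ℝ} (ha : 0 ≤ a) :
    ∃ K ≥ 0, ∀ x : ℝ, -1 < x →
      |invPowRemainder a n x| ≤ K * (|x| ^ n + x ^ (2 * N) * (1 + x) ^ (-a)) := by
  obtain ⟨K, hK0, hK⟩ := exists_abs_invPowRemainder_le_of_neg_half_le n ha
  set C := ∑ k ∈ range n, |invPowCoeff a k|
  have hC : 0 ≤ C := sum_nonneg fun k _ => abs_nonneg _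
  refine ⟨K + 4 ^ N * (1 + C), by positivity, fun x hx => ?_⟩
  have hrpow : 0 ≤ (1 + x) ^ (-a) := rpow_nonneg (by linarith) _
  have hfar : 0 ≤ x ^ (2 * N) * (1 + x) ^ (-a) := by rw [pow_mul]; positivity
  have hnear : 0 ≤ |x| ^ n := by positivity
  rcases le_or_gt (-(1 / 2)) x with hx' | hx'
  · calc |invPowRemainder a n x| ≤ K * |x| ^ n := hK x hx'
      _ ≤ (K + 4 ^ N * (1 + C)) * (|x| ^ n + x ^ (2 * N) * (1 + x) ^ (-a)) := by
        gcongr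
        · exact le_add_of_nonneg_right (by positivity)
        · exact le_add_of_nonneg_right hfar
  · have hone : 1 ≤ (1 + x) ^ (-a) :=
      one_le_rpow_of_pos_of_le_one_of_nonpos (by linarith) (by linarith) (by linarith)
    have hpoly : |∑ k ∈ range n, invPowCoeff a k * x ^ k| ≤ C := by
      refine (abs_sum_le_sum_abs _ _).trans (sum_le_sum fun k _ => ?_)
      rw [abs_mul, abs_pow]
      exact mul_le_of_le_one_right (abs_nonneg _)
        (pow_le_one₀ (abs_nonneg _) (abs_le.2 ⟨by linarith, by linarith⟩))
    have hfar_pow : 1 ≤ 4 ^ N * x ^ (2 * N) := by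
      rw [pow_mul, ← mul_pow]
      exact one_le_pow₀ (by nlinarith)
    calc |invPowRemainder a n x| ≤ (1 + x) ^ (-a) + C := by
          refine (abs_sub _ _).trans ?_
          rw [abs_of_nonneg hrpow]
          linarith
      _ ≤ 4 ^ N * x ^ (2 * N) * ((1 + C) * (1 + x) ^ (-a)) := by
          refine le_trans ?_ (le_mul_of_one_le_left (by positivity) hfar_pow)
          nlinarith
      _ ≤ (K + 4 ^ N * (1 + C)) * (|x| ^ n + x ^ (2 * N) * (1 + x) ^ (-a)) := by
          nlinarith [mul_nonneg hK0 hnear, mul_nonneg hK0 hfar,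
            mul_nonneg (by positivity : (0 : ℝ) ≤ 4 ^ N * (1 + C)) hnear]

lemma abs_pow_add_le (x : ℝ) (u v : ℕ) : |x| ^ (u + v) ≤ x ^ (2 * u) + x ^ (2 * v) := by
  have h := two_mul_le_add_sq (|x| ^ u) (|x| ^ v)
  rw [← pow_mul, ← pow_mul, mul_comm u, mul_comm v, (even_two_mul u).pow_abs,
    (even_two_mul v).pow_abs, mul_assoc, ← pow_add] at h
  nlinarith [pow_nonneg (abs_nonneg x) (u + v)]

section PoissonRemainder

variable {m a : ℝ}

lemma one_add_scaledDeviation (hm : 0 ≤ m) (s : ℕ) :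
    1 + scaledDeviation m s = (s + 1) / (m + 1) := by
  rw [scaledDeviation]
  field_simp
  ring

lemma one_add_scaledDeviation_rpow_neg_le (hm : 0 ≤ m) (ha : 0 ≤ a) (s : ℕ) :
    (1 + scaledDeviation m s) ^ (-a) ≤ (m + 1) ^ ⌈a⌉₊ := by
  rw [one_add_scaledDeviation hm, rpow_neg (by positivity), div_rpow (by positivity)
    (by positivity), inv_div, ← rpow_natCast]
  calc (m + 1) ^ a / ((s : ℝ) + 1) ^ a ≤ (m + 1) ^ a :=
        div_le_self (by positivity) (one_le_rpow (by simp) ha)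
    _ ≤ (m + 1) ^ (⌈a⌉₊ : ℝ) := rpow_le_rpow_of_exponent_le (by linarith) (Nat.le_ceil a)

lemma summable_poissonWeight_mul_one_add_scaledDeviation_rpow_neg (hm : 0 ≤ m) (ha : 0 ≤ a) :
    Summable fun s => poissonWeight m s * (1 + scaledDeviation m s) ^ (-a) := by
  refine summable_poissonWeight_mul_of_abs_le (A := (m + 1) ^ ⌈a⌉₊) hm fun s => ?_
  have hX : 0 ≤ 1 + scaledDeviation m s := by rw [one_add_scaledDeviation hm]; positivity
  rw [abs_of_nonneg (rpow_nonneg hX _)]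
  exact (one_add_scaledDeviation_rpow_neg_le hm ha s).trans
    (le_mul_of_one_le_right (by positivity) (one_le_exp (by positivity)))

lemma hasSum_poissonWeight_mul_invPowRemainder (hm : 0 ≤ m) (ha : 0 ≤ a) (n : ℕ) :
    HasSum (fun s => poissonWeight m s * invPowRemainder a n (scaledDeviation m s))
      ((∑' s, poissonWeight m s * (1 + scaledDeviation m s) ^ (-a)) -
        ∑ k ∈ range n, invPowCoeff a k * (poissonCentralMoment m k / (m + 1) ^ k)) := by
  have hpoly := hasSum_sum fun k (_ : k ∈ range n) =>
    (hasSum_poissonWeight_mul_scaledDeviation_pow hm k).mul_left (invPowCoeff a k)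
  refine ((summable_poissonWeight_mul_one_add_scaledDeviation_rpow_neg hm ha).hasSum.sub
    hpoly).congr_fun fun s => ?_
  rw [invPowRemainder, mul_sub, mul_sum]
  congr 1
  exact sum_congr rfl fun k _ => by ring

lemma exists_tsum_poissonWeight_mul_abs_invPowRemainder_le (ha : 0 ≤ a) (u v N : ℕ) :
    ∃ K, ∀ m : ℝ, 0 ≤ m →
      ∑' s, poissonWeight m s * |invPowRemainder a (u + v) (scaledDeviation m s)| ≤
        K * (poissonCentralMoment m (2 * u) / (m + 1) ^ (2 * u)
          + poissonCentralMoment m (2 * v) / (m + 1) ^ (2 * v)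
          + (m + 1) ^ ⌈a⌉₊ * (poissonCentralMoment m (2 * N) / (m + 1) ^ (2 * N))) := by
  obtain ⟨K, hK0, hK⟩ := exists_abs_invPowRemainder_le (u + v) N ha
  refine ⟨K, fun m hm => ?_⟩
  have hmajorant := (((hasSum_poissonWeight_mul_scaledDeviation_pow hm (2 * u)).add
    (hasSum_poissonWeight_mul_scaledDeviation_pow hm (2 * v))).add
    ((hasSum_poissonWeight_mul_scaledDeviation_pow hm (2 * N)).mul_left
      ((m + 1) ^ ⌈a⌉₊))).mul_left K
  have habs : Summable fun s =>
      poissonWeight m s * |invPowRemainder a (u + v) (scaledDeviation m s)| :=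
    (hasSum_poissonWeight_mul_invPowRemainder hm ha (u + v)).summable.abs.congr fun s => by
      rw [abs_mul, abs_of_nonneg (poissonWeight_nonneg hm s)]
  refine hasSum_le (fun s => ?_) habs.hasSum hmajorant
  set X := scaledDeviation m s
  have hX : 0 < 1 + X := by rw [one_add_scaledDeviation hm]; positivity
  have hR : |invPowRemainder a (u + v) X| ≤
      K * (X ^ (2 * u) + X ^ (2 * v) + (m + 1) ^ ⌈a⌉₊ * X ^ (2 * N)) := by
    refine (hK X (by linarith)).trans (mul_le_mul_of_nonneg_left (add_le_add
      (abs_pow_add_le X u v) ?_) hK0)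
    rw [mul_comm]
    exact mul_le_mul_of_nonneg_right (one_add_scaledDeviation_rpow_neg_le hm ha s)
      (by rw [pow_mul]; positivity)
  calc poissonWeight m s * |invPowRemainder a (u + v) X|
      ≤ poissonWeight m s * (K * (X ^ (2 * u) + X ^ (2 * v) + (m + 1) ^ ⌈a⌉₊ * X ^ (2 * N))) :=
        mul_le_mul_of_nonneg_left hR (poissonWeight_nonneg hm s)
    _ = _ := by ring

theorem tsum_poissonWeight_mul_abs_invPowRemainder_isBigO (ha : 0 ≤ a) (n : ℕ) :
    (fun m => ∑' s, poissonWeight m s * |invPowRemainder a n (scaledDeviation m s)|) =O[atTop]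
      fun m => (m ^ (n / 2))⁻¹ := by
  obtain ⟨K, hK⟩ :=
    exists_tsum_poissonWeight_mul_abs_invPowRemainder_le ha ((n + 1) / 2) (n / 2) (⌈a⌉₊ + n / 2)
  rw [show (n + 1) / 2 + n / 2 = n by omega] at hK
  have hmoment (j : ℕ) : (fun m => poissonCentralMoment m (2 * j) / (m + 1) ^ (2 * j))
      =O[atTop] fun m => (m ^ j)⁻¹ := by
    simpa [show (2 * j + 1) / 2 = j by omega] using poissonCentralMoment_div_pow_isBigO (2 * j)
  have hshift : (fun m : ℝ => (m + 1) ^ ⌈a⌉₊) =O[atTop] fun m => m ^ ⌈a⌉₊ := by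
    refine IsBigO.pow (.of_bound 2 ?_) _
    filter_upwards [eventually_ge_atTop 1] with m hm
    rw [Real.norm_of_nonneg (by linarith), Real.norm_of_nonneg (by linarith)]
    linarith
  have htail : (fun m => (m + 1) ^ ⌈a⌉₊ * (poissonCentralMoment m (2 * (⌈a⌉₊ + n / 2)) /
      (m + 1) ^ (2 * (⌈a⌉₊ + n / 2)))) =O[atTop] fun m => (m ^ (n / 2))⁻¹ := by
    refine (hshift.mul (hmoment _)).congr' EventuallyEq.rfl ?_
    filter_upwards [eventually_gt_atTop 0] with m hm
    rw [pow_add]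
    field_simp
  have hmajorant := ((((hmoment ((n + 1) / 2)).trans (isBigO_inv_pow_inv_pow_of_le (by omega))).add
    (hmoment _)).add htail).const_mul_left K
  refine IsBigO.trans (.of_bound' ?_) hmajorant
  filter_upwards [eventually_ge_atTop 0] with m hm
  rw [Real.norm_of_nonneg (tsum_nonneg fun s =>
    mul_nonneg (poissonWeight_nonneg hm s) (abs_nonneg _))]
  exact (hK m hm).trans (le_abs_self _)

theorem tsum_poissonWeight_mul_invPowRemainder_isBigO (ha : 0 ≤ a) (n : ℕ) :
    (fun m => ∑' s, poissonWeight m s * invPowRemainder a n (scaledDeviation m s)) =O[atTop]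
      fun m => (m ^ ((n + 1) / 2))⁻¹ := by
  have hnext : (fun m => ∑' s, poissonWeight m s * invPowRemainder a (n + 1) (scaledDeviation m s))
      =O[atTop] fun m => (m ^ ((n + 1) / 2))⁻¹ := by
    refine .trans (.of_bound' ?_) (tsum_poissonWeight_mul_abs_invPowRemainder_isBigO ha (n + 1))
    filter_upwards [eventually_ge_atTop 0] with m hm
    calc ‖∑' s, poissonWeight m s * invPowRemainder a (n + 1) (scaledDeviation m s)‖
        ≤ ∑' s, ‖poissonWeight m s * invPowRemainder a (n + 1) (scaledDeviation m s)‖ :=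
          norm_tsum_le_tsum_norm
            (hasSum_poissonWeight_mul_invPowRemainder hm ha (n + 1)).summable.norm
      _ = ∑' s, poissonWeight m s * |invPowRemainder a (n + 1) (scaledDeviation m s)| :=
          tsum_congr fun s => by
            rw [Real.norm_eq_abs, abs_mul, abs_of_nonneg (poissonWeight_nonneg hm s)]
      _ ≤ _ := le_norm_self _
  refine (((poissonCentralMoment_div_pow_isBigO n).const_mul_left (invPowCoeff a n)).add
    hnext).congr' ?_ EventuallyEq.rfl
  filter_upwards [eventually_ge_atTop 0] with m hm
  have hsplit := ((hasSum_poissonWeight_mul_scaledDeviation_pow hm n).mul_left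
    (invPowCoeff a n)).add (hasSum_poissonWeight_mul_invPowRemainder hm ha (n + 1)).summable.hasSum
  exact (hsplit.congr_fun fun s => by rw [invPowRemainder_eq_add_succ]; ring).tsum_eq.symm

end PoissonRemainder

lemma inverseMoment_sub_expansion_eq {r m : ℝ} (hr : -1 ≤ r) (hm : 0 ≤ m) (P : ℕ) :
    (∑' s : ℕ, exp (-m) * m ^ (s + 1) / ((s + 1)! : ℝ) / ((s : ℝ) + 1) ^ r) -
      m / (m + 1) ^ (r + 1) * ∑ k ∈ range P, (-1 : ℝ) ^ k *
        ((∏ j ∈ range k, (r + (j : ℝ) + 1)) / (k ! : ℝ)) *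
          (∑' s : ℕ, exp (-m) * m ^ s / (s ! : ℝ) * ((s : ℝ) - m) ^ k) / (m + 1) ^ k =
    m / (m + 1) ^ (r + 1) *
      ∑' s, poissonWeight m s * invPowRemainder (r + 1) P (scaledDeviation m s) := by
  have hterm (s : ℕ) : exp (-m) * m ^ (s + 1) / ((s + 1)! : ℝ) / ((s : ℝ) + 1) ^ r =
      m / (m + 1) ^ (r + 1) * (poissonWeight m s * (1 + scaledDeviation m s) ^ (-(r + 1))) := by
    rw [one_add_scaledDeviation hm, rpow_neg (by positivity),
      div_rpow (by positivity) (by positivity), rpow_add_one (by positivity : (s : ℝ) + 1 ≠ 0)]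
    simp only [poissonWeight, Nat.factorial_succ, Nat.cast_mul, Nat.cast_succ, pow_succ]
    field_simp
  have hcoeff (k : ℕ) : (-1 : ℝ) ^ k * ((∏ j ∈ range k, (r + (j : ℝ) + 1)) / (k ! : ℝ)) =
      invPowCoeff (r + 1) k := by
    have hprod : ∏ j ∈ range k, (r + (j : ℝ) + 1) = ∏ j ∈ range k, (r + 1 + j) :=
      prod_congr rfl fun j _ => by ring
    rw [hprod, invPowCoeff, mul_div_assoc]
  rw [(hasSum_poissonWeight_mul_invPowRemainder hm (by linarith) P).tsum_eq, mul_sub,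
    tsum_congr hterm, tsum_mul_left]
  congr 2
  exact sum_congr rfl fun k _ => by
    rw [← hcoeff, poissonCentralMoment]
    simp only [poissonWeight]
    ring

theorem inverse_moment_poisson_asymptotic_expansion_general
    (r : ℝ) (hr : 0 < r) (P : ℕ) :
    ∃ C > (0:ℝ), ∃ M₀ > (0:ℝ), ∀ m : ℝ, M₀ ≤ m →
      |(∑' s : ℕ, Real.exp (-m) * m ^ (s + 1) / (Nat.factorial (s + 1) : ℝ)
            / ((s : ℝ) + 1) ^ r)
        - (m / (m + 1) ^ (r + 1)) *
            ∑ k ∈ Finset.range P, (-1 : ℝ) ^ k *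
              ((∏ j ∈ Finset.range k, (r + (j : ℝ) + 1)) / (Nat.factorial k : ℝ)) *
              (∑' s : ℕ, Real.exp (-m) * m ^ s / (Nat.factorial s : ℝ) * ((s : ℝ) - m) ^ k)
              / (m + 1) ^ k|
      ≤ C * (m / (m + 1) ^ (r + 1)) / m ^ ((P + 1) / 2) := by
  obtain ⟨C, hC, hbound⟩ :=
    (tsum_poissonWeight_mul_invPowRemainder_isBigO (a := r + 1) (by linarith) P).exists_pos
  obtain ⟨M, hM⟩ := eventually_atTop.1 (hbound.bound.and (eventually_gt_atTop 0))
  refine ⟨C, hC, max M 1, by positivity, fun m hm => ?_⟩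
  obtain ⟨hle, hm0⟩ := hM m (le_of_max_le_left hm)
  have hfactor : 0 < m / (m + 1) ^ (r + 1) := by positivity
  rw [inverseMoment_sub_expansion_eq (by linarith) hm0.le P, abs_mul, abs_of_pos hfactor,
    mul_comm C, mul_div_assoc]
  refine mul_le_mul_of_nonneg_left ?_ hfactor.le
  simpa [norm_inv, norm_pow, abs_of_pos hm0, div_eq_mul_inv] using hle

/-- Asymptotic expansion of the `r`-th inverse moment of the positive Poisson
distribution: `g_r = (m/(m+1)^{r+1}) { Σ_{k=0}^{P-1} (-1)^k C(r+k,k) μ̃_k/(m+1)^k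
+ O(1/m^{⌈P/2⌉}) }`. -/
theorem inverse_moment_poisson_asymptotic_expansion
    (r : ℝ) (hr : 0 < r) (P : ℕ) (hP : 1 ≤ P) :
    ∃ C > (0:ℝ), ∃ M₀ > (0:ℝ), ∀ m : ℝ, M₀ ≤ m →
      |(∑' s : ℕ, Real.exp (-m) * m ^ (s + 1) / (Nat.factorial (s + 1) : ℝ)
            / ((s : ℝ) + 1) ^ r)
        - (m / (m + 1) ^ (r + 1)) *
            ∑ k ∈ Finset.range P, (-1 : ℝ) ^ k *
              ((∏ j ∈ Finset.range k, (r + (j : ℝ) + 1)) / (Nat.factorial k : ℝ)) *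
              (∑' s : ℕ, Real.exp (-m) * m ^ s / (Nat.factorial s : ℝ) * ((s : ℝ) - m) ^ k)
              / (m + 1) ^ k|
      ≤ C * (m / (m + 1) ^ (r + 1)) / m ^ ((P + 1) / 2) :=
  inverse_moment_poisson_asymptotic_expansion_general r hr P
end
end
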